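/- For every real a with |a| < 1, (1/2π) ∫_{−π}^{π} [2(cos ω − a)/(1 + a² − 2a cos ω)]² dω = 2/(1 − a²). -/

import Mathlib

/-!
Since `P_a(ω) = (cos ω - a)² + sin² ω`, the integrand splits as
`4 (cos ω - a)² / P_a² = 2 / P_a + 2 ((cos ω - a)² - sin² ω) / P_a²`.
Here `1 / P_a` is the Poisson kernel divided by `1 - a²`; it is the derivative of
`(ω + 2 arctan (a sin ω / (1 - a cos ω))) / (1 - a²)`, so its mean is `1 / (1 - a²)`.
The second term is `Re (e^{iω} / (1 - a e^{iω}))²`, which has mean zero; concretely it is the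
derivative of the `2π`-periodic function
`sin ω / (a P_a) - arctan (a sin ω / (1 - a cos ω)) / a²` (of `sin ω cos ω` when `a = 0`).
-/

open Real

noncomputable def poissonDenom (a ω : ℝ) : ℝ := 1 + a ^ 2 - 2 * a * cos ω

lemma poissonDenom_eq_sq_add_sq (a ω : ℝ) :
    poissonDenom a ω = (cos ω - a) ^ 2 + sin ω ^ 2 := by
  unfold poissonDenom
  linear_combination (sin_sq_add_cos_sq ω).symm

lemma hasDerivAt_poissonDenom (a ω : ℝ) :
    HasDerivAt (poissonDenom a) (2 * a * sin ω) ω := by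
  have := ((hasDerivAt_cos ω).const_mul (2 * a)).const_sub (1 + a ^ 2)
  rwa [mul_neg, neg_neg] at this

lemma continuous_poissonDenom (a : ℝ) : Continuous (poissonDenom a) := by
  unfold poissonDenom
  fun_prop

lemma mul_cos_le_abs (a ω : ℝ) : a * cos ω ≤ |a| :=
  (le_abs_self _).trans <| by
    rw [abs_mul]
    exact mul_le_of_le_one_right (abs_nonneg a) (abs_cos_le_one ω)

lemma hasDerivAt_sin_div_poissonDenom {a ω : ℝ} (hP : poissonDenom a ω ≠ 0) :
    HasDerivAt (fun x => sin x / poissonDenom a x)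
      (((1 + a ^ 2) * cos ω - 2 * a) / poissonDenom a ω ^ 2) ω := by
  refine ((hasDerivAt_sin ω).div (hasDerivAt_poissonDenom a ω) hP).congr_deriv ?_
  congr 1
  unfold poissonDenom
  linear_combination (-2 * a) * (sin_sq_add_cos_sq ω)

lemma hasDerivAt_arctan_mul_sin_div_one_sub_mul_cos {a ω : ℝ} (hQ : 1 - a * cos ω ≠ 0) :
    HasDerivAt (fun x => arctan (a * sin x / (1 - a * cos x)))
      (a * (cos ω - a) / poissonDenom a ω) ω := by
  have hu : HasDerivAt (fun x => a * sin x / (1 - a * cos x))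
      (a * (cos ω - a) / (1 - a * cos ω) ^ 2) ω := by
    refine (((hasDerivAt_sin ω).const_mul a).div
      (((hasDerivAt_cos ω).const_mul a).const_sub 1) hQ).congr_deriv ?_
    field_simp
    linear_combination (-a ^ 2) * (sin_sq_add_cos_sq ω)
  have h_one_add_sq : 1 + (a * sin ω / (1 - a * cos ω)) ^ 2
      = poissonDenom a ω / (1 - a * cos ω) ^ 2 := by
    field_simp
    unfold poissonDenom
    linear_combination a ^ 2 * (sin_sq_add_cos_sq ω)
  refine hu.arctan.congr_deriv ?_
  have hP : poissonDenom a ω ≠ 0 := by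
    intro h
    rw [h, zero_div] at h_one_add_sq
    linarith [sq_nonneg (a * sin ω / (1 - a * cos ω))]
  rw [h_one_add_sq]
  field_simp

lemma sq_two_mul_cos_sub_div_poissonDenom {a ω : ℝ} (hP : poissonDenom a ω ≠ 0) :
    (2 * (cos ω - a) / poissonDenom a ω) ^ 2
      = 2 * (poissonDenom a ω)⁻¹
        + 2 * (((cos ω - a) ^ 2 - sin ω ^ 2) / poissonDenom a ω ^ 2) := by
  field_simp
  rw [poissonDenom_eq_sq_add_sq]
  ring

section

variable {a : ℝ}

lemma poissonDenom_pos (ha : |a| < 1) (ω : ℝ) : 0 < poissonDenom a ω := by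
  unfold poissonDenom
  nlinarith [mul_cos_le_abs a ω, sq_abs a]

lemma one_sub_mul_cos_pos (ha : |a| < 1) (ω : ℝ) : 0 < 1 - a * cos ω := by
  linarith [mul_cos_le_abs a ω]

lemma continuous_poissonDenom_inv (ha : |a| < 1) :
    Continuous fun ω => (poissonDenom a ω)⁻¹ :=
  (continuous_poissonDenom a).inv₀ fun ω => (poissonDenom_pos ha ω).ne'

lemma continuous_sq_sub_sq_div_poissonDenom_sq (ha : |a| < 1) :
    Continuous fun ω => ((cos ω - a) ^ 2 - sin ω ^ 2) / poissonDenom a ω ^ 2 :=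
  (by fun_prop : Continuous fun ω => (cos ω - a) ^ 2 - sin ω ^ 2).div
    ((continuous_poissonDenom a).pow 2) fun ω => pow_ne_zero 2 (poissonDenom_pos ha ω).ne'

theorem integral_inv_poissonDenom (ha : |a| < 1) :
    ∫ ω in (-π)..π, (poissonDenom a ω)⁻¹ = 2 * π / (1 - a ^ 2) := by
  have h1a : 1 - a ^ 2 ≠ 0 := (sub_pos.2 ((sq_lt_one_iff_abs_lt_one a).2 ha)).ne'
  have hderiv : ∀ x ∈ Set.uIcc (-π) π, HasDerivAt
      (fun x => (x + 2 * arctan (a * sin x / (1 - a * cos x))) / (1 - a ^ 2))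
      (poissonDenom a x)⁻¹ x := by
    intro x _
    have hP := (poissonDenom_pos ha x).ne'
    refine (((hasDerivAt_id x).add ((hasDerivAt_arctan_mul_sin_div_one_sub_mul_cos
      (one_sub_mul_cos_pos ha x).ne').const_mul 2)).div_const _).congr_deriv ?_
    field_simp
    unfold poissonDenom
    ring
  rw [intervalIntegral.integral_eq_sub_of_hasDerivAt hderiv
    ((continuous_poissonDenom_inv ha).intervalIntegrable _ _)]
  simp only [sin_pi, sin_neg, neg_zero, mul_zero, zero_div, arctan_zero]
  ring

theorem integral_sq_sub_sq_div_poissonDenom_sq (ha : |a| < 1) :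
    ∫ ω in (-π)..π, ((cos ω - a) ^ 2 - sin ω ^ 2) / poissonDenom a ω ^ 2 = 0 := by
  have hint : IntervalIntegrable _ MeasureTheory.volume (-π) π :=
    (continuous_sq_sub_sq_div_poissonDenom_sq ha).intervalIntegrable _ _
  rcases eq_or_ne a 0 with rfl | ha0
  · have hderiv : ∀ x ∈ Set.uIcc (-π) π, HasDerivAt (fun x => sin x * cos x)
        (((cos x - 0) ^ 2 - sin x ^ 2) / poissonDenom 0 x ^ 2) x := by
      intro x _
      refine ((hasDerivAt_sin x).mul (hasDerivAt_cos x)).congr_deriv ?_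
      simp only [poissonDenom]
      ring
    rw [intervalIntegral.integral_eq_sub_of_hasDerivAt hderiv hint]
    simp
  · have hderiv : ∀ x ∈ Set.uIcc (-π) π, HasDerivAt
        (fun x => sin x / poissonDenom a x / a - arctan (a * sin x / (1 - a * cos x)) / a ^ 2)
        (((cos x - a) ^ 2 - sin x ^ 2) / poissonDenom a x ^ 2) x := by
      intro x _
      have hP := (poissonDenom_pos ha x).ne'
      refine (((hasDerivAt_sin_div_poissonDenom hP).div_const a).sub
        ((hasDerivAt_arctan_mul_sin_div_one_sub_mul_cos
          (one_sub_mul_cos_pos ha x).ne').div_const (a ^ 2))).congr_deriv ?_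
      field_simp
      unfold poissonDenom
      linear_combination a * (sin_sq_add_cos_sq x)
    rw [intervalIntegral.integral_eq_sub_of_hasDerivAt hderiv hint]
    simp

end

theorem tangent_norm_sq (a : ℝ) (ha : |a| < 1) :
    (1 / (2 * π)) *
      ∫ ω in (-π)..π, (2 * (Real.cos ω - a) / (1 + a ^ 2 - 2 * a * Real.cos ω)) ^ 2
      = 2 / (1 - a ^ 2) := by
  have h1a : 1 - a ^ 2 ≠ 0 := (sub_pos.2 ((sq_lt_one_iff_abs_lt_one a).2 ha)).ne'
  change 1 / (2 * π) * ∫ ω in (-π)..π, (2 * (cos ω - a) / poissonDenom a ω) ^ 2 = _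
  rw [intervalIntegral.integral_congr
      fun ω _ => sq_two_mul_cos_sub_div_poissonDenom (poissonDenom_pos ha ω).ne',
    intervalIntegral.integral_add, intervalIntegral.integral_const_mul,
    intervalIntegral.integral_const_mul, integral_inv_poissonDenom ha,
    integral_sq_sub_sq_div_poissonDenom_sq ha]
  · field_simp
    ring
  · exact (continuous_const.mul (continuous_poissonDenom_inv ha)).intervalIntegrable _ _
  · exact (continuous_const.mul
      (continuous_sq_sub_sq_div_poissonDenom_sq ha)).intervalIntegrable _ _
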